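/- arXiv:1507.08979 — 2 statements merged into one kernel-verified Lean document; each statement's English description precedes it below -/
import Mathlib

section
/- Consider the linear program: maximize R_d = (1−β_m)·A + (1−β_μ)·B over (β_m, β_μ) ∈ [0,1]², subject to β_m·A_u + β_μ·B ≥ ζ·R_d, where A, B, A_u > 0 with A > B, A_u < A, and 0 < ζ ≤ 1. Then: (i) if ζ ≤ B/A, the optimum is β_m* = 0, β_μ* = (1 + A/B)/(1 + ζ^{−1}); (ii) if ζ > B/A, the optimum is β_μ* = 1, β_m* = (ζ − B/A)/(ζ + A_u/A). -/
theorem optimal_ul_allocations (A B Au ζ : ℝ) (hA : 0 < A) (hB : 0 < B)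
    (hAu : 0 < Au) (hAB : B < A) (hAuA : Au < A) (hζ : 0 < ζ) (hζ1 : ζ ≤ 1) :
    let Rd : ℝ → ℝ → ℝ := fun βm βμ => (1 - βm) * A + (1 - βμ) * B
    let feasible : ℝ → ℝ → Prop := fun βm βμ =>
      βm ∈ Set.Icc (0:ℝ) 1 ∧ βμ ∈ Set.Icc (0:ℝ) 1 ∧ βm * Au + βμ * B ≥ ζ * Rd βm βμ
    (ζ ≤ B / A →
      feasible 0 ((1 + A / B) / (1 + ζ⁻¹)) ∧
      ∀ βm βμ, feasible βm βμ → Rd βm βμ ≤ Rd 0 ((1 + A / B) / (1 + ζ⁻¹))) ∧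
    (ζ > B / A →
      feasible ((ζ - B / A) / (ζ + Au / A)) 1 ∧
      ∀ βm βμ, feasible βm βμ → Rd βm βμ ≤ Rd ((ζ - B / A) / (ζ + Au / A)) 1) := by
  intro Rd feasible
  have hζne : ζ ≠ 0 := ne_of_gt hζ
  have hBne : B ≠ 0 := ne_of_gt hB
  have hAne : A ≠ 0 := ne_of_gt hA
  constructor
  · intro hcase
    have hζA : ζ * A ≤ B := (le_div_iff₀ hA).mp hcase
    have hden : (0:ℝ) < 1 + ζ⁻¹ := by positivity
    have hseq : (1 + A / B) / (1 + ζ⁻¹) = ζ * (A + B) / ((1 + ζ) * B) := by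
      field_simp
      ring
    have hRdeq : Rd 0 ((1 + A / B) / (1 + ζ⁻¹)) = (A + B) / (1 + ζ) := by
      show (1 - 0) * A + (1 - (1 + A / B) / (1 + ζ⁻¹)) * B = (A + B) / (1 + ζ)
      rw [hseq]
      field_simp
      ring
    constructor
    · refine ⟨⟨le_refl 0, zero_le_one⟩, ⟨?_, ?_⟩, ?_⟩
      · rw [hseq]; positivity
      · rw [hseq, div_le_one (by positivity)]
        nlinarith
      · show 0 * Au + (1 + A / B) / (1 + ζ⁻¹) * B ≥ ζ * Rd 0 ((1 + A / B) / (1 + ζ⁻¹))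
        rw [hRdeq, hseq]
        refine le_of_eq ?_
        field_simp
        ring
    · rintro βm βμ ⟨⟨hm0, hm1⟩, ⟨hu0, hu1⟩, hc⟩
      rw [hRdeq, le_div_iff₀ (by positivity)]
      show ((1 - βm) * A + (1 - βμ) * B) * (1 + ζ) ≤ A + B
      have h1 : βm * Au + βμ * B ≥ ζ * ((1 - βm) * A + (1 - βμ) * B) := hc
      nlinarith [mul_nonneg hm0 (sub_pos.mpr hAuA).le]
  · intro hcase
    have hζA : B < ζ * A := by
      rw [gt_iff_lt, div_lt_iff₀ hA] at hcase
      linarith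
    have hden : (0:ℝ) < ζ * A + Au := by positivity
    have hseq : (ζ - B / A) / (ζ + Au / A) = (ζ * A - B) / (ζ * A + Au) := by
      rw [div_eq_div_iff (ne_of_gt (by positivity : (0:ℝ) < ζ + Au / A)) hden.ne']
      field_simp
    have hRdeq : Rd ((ζ - B / A) / (ζ + Au / A)) 1 = A * (Au + B) / (ζ * A + Au) := by
      show (1 - (ζ - B / A) / (ζ + Au / A)) * A + (1 - 1) * B = A * (Au + B) / (ζ * A + Au)
      rw [hseq]
      field_simp
      ring
    constructor
    · refine ⟨⟨?_, ?_⟩, ⟨zero_le_one, le_refl 1⟩, ?_⟩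
      · rw [hseq]; exact div_nonneg (by linarith) hden.le
      · rw [hseq, div_le_one hden]; linarith
      · show (ζ - B / A) / (ζ + Au / A) * Au + 1 * B ≥ ζ * Rd ((ζ - B / A) / (ζ + Au / A)) 1
        rw [hRdeq, hseq]
        refine le_of_eq ?_
        field_simp
        ring
    · rintro βm βμ ⟨⟨hm0, hm1⟩, ⟨hu0, hu1⟩, hc⟩
      rw [hRdeq, le_div_iff₀ hden]
      show ((1 - βm) * A + (1 - βμ) * B) * (ζ * A + Au) ≤ A * (Au + B)
      have h1 : βm * Au + βμ * B ≥ ζ * ((1 - βm) * A + (1 - βμ) * B) := hc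
      nlinarith [mul_nonneg (sub_nonneg.mpr hu1) (sub_pos.mpr hAuA).le,
        mul_le_mul_of_nonneg_left h1 hA.le]
end

section
/- Consider the modified linear program where mmW uplink decoupling makes A_u ≥ A possible: maximize (1−β_m)A + (1−β_μ)B subject to β_m A_u + β_μ B ≥ ζ[(1−β_m)A + (1−β_μ)B], (β_m,β_μ) ∈ [0,1]². If A_u ≥ A > B > 0 and 0 < ζ ≤ min{1, A_u/B}, then the optimum is β_μ* = 0 and β_m* = (1 + B/A)·(1 + A_u/(ζA))^{−1}, i.e., all uplink traffic is carried on mmW and μW is dedicated to downlink. -/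
theorem decoupled_ul_allocation (A B Au ζ : ℝ) (hB : 0 < B) (hAB : B < A)
    (hAu : A ≤ Au) (hζ : 0 < ζ) (hζ1 : ζ ≤ min 1 (Au / B)) :
    let Rd : ℝ → ℝ → ℝ := fun βm βμ => (1 - βm) * A + (1 - βμ) * B
    let feasible : ℝ → ℝ → Prop := fun βm βμ =>
      βm ∈ Set.Icc (0:ℝ) 1 ∧ βμ ∈ Set.Icc (0:ℝ) 1 ∧ βm * Au + βμ * B ≥ ζ * Rd βm βμ
    feasible ((1 + B / A) * (1 + Au / (ζ * A))⁻¹) 0 ∧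
    ∀ βm βμ, feasible βm βμ →
      Rd βm βμ ≤ Rd ((1 + B / A) * (1 + Au / (ζ * A))⁻¹) 0 := by
  intro Rd feasible
  have hA : 0 < A := hB.trans hAB
  have hζA : 0 < ζ * A := mul_pos hζ hA
  have hζB : ζ * B ≤ Au := by
    have h := (le_min_iff.mp hζ1).2
    calc ζ * B ≤ (Au / B) * B := by nlinarith
    _ = Au := by field_simp
  have hAu0 : 0 < Au := hA.trans_le hAu
  set b : ℝ := (1 + B / A) * (1 + Au / (ζ * A))⁻¹ with hbdef
  have hden : 0 < 1 + Au / (ζ * A) := by positivity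
  have key : b * (Au + ζ * A) = ζ * (A + B) := by
    rw [hbdef]
    field_simp
    ring
  have hb0 : 0 ≤ b := by positivity
  have hb1 : b ≤ 1 := by nlinarith [key]
  have hfeas : feasible b 0 := by
    refine ⟨⟨hb0, hb1⟩, ⟨le_refl 0, zero_le_one⟩, ?_⟩
    simp only [Rd]
    nlinarith [key]
  refine ⟨hfeas, ?_⟩
  rintro βm βμ ⟨⟨hm0, hm1⟩, ⟨hu0, hu1⟩, hcon⟩
  simp only [Rd] at hcon ⊢
  nlinarith [key, mul_nonneg (mul_nonneg hu0 hB.le) (sub_nonneg.mpr hAu),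
    mul_le_mul_of_nonneg_right hcon hA.le]
end
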